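/- Let S be an n-dimensional linear subspace of ℝⁿ × ℝᵐ with orthonormal basis τ₁, …, τₙ, let P₀ = ℝⁿ × {0}, let ψ : ℝ → ℝ be differentiable, and define the vector field ζ(x,y) = ψ(‖x‖)·(x,0) on ℝⁿ × ℝᵐ. Then at every point (x,y) with x ≠ 0, the tangential divergence of ζ along S satisfies ∑_{i=1}^n ⟨Dζ(x,y)[τᵢ], τᵢ⟩ = ψ(‖x‖)(n − (1/2)‖π_S − π_{P₀}‖_F²) + ψ'(‖x‖) ‖π_S(x,0)‖² / ‖x‖. -/

import Mathlib

/-- The Euclidean space `ℝⁿ × ℝᵐ` with the (L²) product inner product. -/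
noncomputable abbrev E2 (n m : ℕ) :=
  WithLp 2 (EuclideanSpace ℝ (Fin n) × EuclideanSpace ℝ (Fin m))

/-- The point `(x, y)` of `ℝⁿ × ℝᵐ`. -/
noncomputable def mk2 {n m : ℕ} (x : EuclideanSpace ℝ (Fin n))
    (y : EuclideanSpace ℝ (Fin m)) : E2 n m :=
  (WithLp.linearEquiv 2 ℝ _).symm (x, y)

/-- The first component `x` of a point `(x,y)` of `ℝⁿ × ℝᵐ`. -/
noncomputable def fst2 {n m : ℕ} (p : E2 n m) : EuclideanSpace ℝ (Fin n) :=
  (WithLp.equiv 2 (EuclideanSpace ℝ (Fin n) × EuclideanSpace ℝ (Fin m)) p).1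

/-- The second component `y` of a point `(x,y)` of `ℝⁿ × ℝᵐ`. -/
noncomputable def snd2 {n m : ℕ} (p : E2 n m) : EuclideanSpace ℝ (Fin m) :=
  (WithLp.equiv 2 (EuclideanSpace ℝ (Fin n) × EuclideanSpace ℝ (Fin m)) p).2

/-- The plane `P₀ = ℝⁿ × {0}` as a linear subspace of `ℝⁿ × ℝᵐ`. -/
noncomputable def P0 (n m : ℕ) : Submodule ℝ (E2 n m) :=
  (Submodule.prod (⊤ : Submodule ℝ (EuclideanSpace ℝ (Fin n)))
    (⊥ : Submodule ℝ (EuclideanSpace ℝ (Fin m)))).comap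
      (WithLp.linearEquiv 2 ℝ _).toLinearMap

/-- The orthogonal projection of `E` onto the subspace `V`, as a map `E → E`. -/
noncomputable def proj {E : Type*} [NormedAddCommGroup E] [InnerProductSpace ℝ E]
    (V : Submodule ℝ E) [V.HasOrthogonalProjection] : E →L[ℝ] E :=
  V.subtypeL.comp V.orthogonalProjectionOnto

/-- The squared Frobenius (Hilbert–Schmidt) norm of a linear map `T : E → E`,
computed via an orthonormal basis of `E`. -/
noncomputable def frobSq {E : Type*} [NormedAddCommGroup E] [InnerProductSpace ℝ E]
    [FiniteDimensional ℝ E] (T : E →L[ℝ] E) : ℝ :=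
  ∑ i, ‖T (stdOrthonormalBasis ℝ E i)‖ ^ 2

/-!
Since `(x, 0) = π_{P₀}(x, y)` and `‖x‖ = ‖π_{P₀}(x, y)‖`, the field is `ζ = Φ ∘ π_{P₀}` with the
radial field `Φ(u) = ψ(‖u‖) u`, whose derivative is `ψ(‖u‖) id + ψ'(‖u‖) ‖u‖⁻¹ ⟨u, ·⟩ u`. Tracing
`Dζ = DΦ ∘ π_{P₀}` over `S` gives `ψ(‖x‖) tr(π_S π_{P₀}) + ψ'(‖x‖) ‖π_S(x, 0)‖² / ‖x‖`, and
expanding the Frobenius norm, `‖π_S − π_{P₀}‖² = dim S + dim P₀ − 2 tr(π_S π_{P₀})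
= 2n − 2 tr(π_S π_{P₀})`.
-/

open RealInnerProductSpace Submodule

section Projection

variable {E : Type*} [NormedAddCommGroup E] [InnerProductSpace ℝ E]
  {ι : Type*} [Fintype ι] {w : ι → E} {K : Submodule ℝ E} [K.HasOrthogonalProjection]

theorem proj_eq_starProjection (V : Submodule ℝ E) [V.HasOrthogonalProjection] :
    proj V = V.starProjection := rfl

theorem Orthonormal.starProjection_eq_sum (hw : Orthonormal ℝ w)
    (hK : span ℝ (Set.range w) = K) (e : E) :
    K.starProjection e = ∑ i, ⟪w i, e⟫ • w i := by
  subst hK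
  refine eq_starProjection_of_mem_orthogonal
    (sum_mem fun i _ => smul_mem _ _ (subset_span (Set.mem_range_self i))) ?_
  have hortho : span ℝ {e - ∑ i, ⟪w i, e⟫ • w i} ⟂ span ℝ (Set.range w) := by
    rw [isOrtho_span]
    rintro _ rfl _ ⟨j, rfl⟩
    rw [inner_sub_left, hw.inner_left_fintype, conj_trivial, real_inner_comm, sub_self]
  exact hortho (mem_span_singleton_self _)

theorem Orthonormal.norm_starProjection_sq (hw : Orthonormal ℝ w)
    (hK : span ℝ (Set.range w) = K) (e : E) :
    ‖K.starProjection e‖ ^ 2 = ∑ i, ⟪w i, e⟫ ^ 2 := by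
  rw [← real_inner_self_eq_norm_sq, hw.starProjection_eq_sum hK, sum_inner]
  simp_rw [real_inner_smul_left, hw.inner_right_fintype, sq]

/-- Both sides are the trace of `π_K L π_K`, computed in the basis `b` of `E` and in the basis `w`
of `K`. -/
theorem Orthonormal.sum_inner_apply_starProjection (hw : Orthonormal ℝ w)
    (hK : span ℝ (Set.range w) = K) {ι' : Type*} [Fintype ι'] (b : OrthonormalBasis ι' ℝ E)
    (L : E →L[ℝ] E) :
    ∑ e, ⟪L (b e), K.starProjection (b e)⟫ = ∑ i, ⟪L (w i), w i⟫ := by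
  have hcol : ∀ i, ∑ e, ⟪w i, b e⟫ * ⟪L (b e), w i⟫ = ⟪L (w i), w i⟫ := fun i =>
    calc ∑ e, ⟪w i, b e⟫ * ⟪L (b e), w i⟫ = ⟪L (∑ e, ⟪b e, w i⟫ • b e), w i⟫ := by
          rw [map_sum, sum_inner]
          refine Finset.sum_congr rfl fun e _ => ?_
          rw [map_smul, real_inner_smul_left, real_inner_comm (w i) (b e)]
      _ = ⟪L (w i), w i⟫ := by rw [b.sum_repr']
  simp_rw [hw.starProjection_eq_sum hK, inner_sum, real_inner_smul_right]
  rw [Finset.sum_comm]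
  exact Finset.sum_congr rfl fun i _ => hcol i

theorem Orthonormal.sum_norm_starProjection_sq (hw : Orthonormal ℝ w)
    (hK : span ℝ (Set.range w) = K) {ι' : Type*} [Fintype ι'] (b : OrthonormalBasis ι' ℝ E) :
    ∑ e, ‖K.starProjection (b e)‖ ^ 2 = Fintype.card ι := by
  have hmem : ∀ i, K.starProjection (w i) = w i := fun i =>
    starProjection_eq_self_iff.2 (hK ▸ subset_span (Set.mem_range_self i))
  simp_rw [← real_inner_self_eq_norm_sq]
  rw [hw.sum_inner_apply_starProjection hK b K.starProjection]
  simp [hmem, hw.1]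

theorem frobSq_starProjection_sub [FiniteDimensional ℝ E] {κ : Type*} [Fintype κ]
    {v : ι → E} {u : κ → E} {V W : Submodule ℝ E} [V.HasOrthogonalProjection]
    [W.HasOrthogonalProjection]
    (hv : Orthonormal ℝ v) (hV : span ℝ (Set.range v) = V)
    (hu : Orthonormal ℝ u) (hW : span ℝ (Set.range u) = W) :
    frobSq (V.starProjection - W.starProjection) =
      Fintype.card ι + Fintype.card κ - 2 * ∑ i, ⟪W.starProjection (v i), v i⟫ := by
  set b := stdOrthonormalBasis ℝ E
  have hcross : ∑ e, ⟪V.starProjection (b e), W.starProjection (b e)⟫ =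
      ∑ i, ⟪W.starProjection (v i), v i⟫ := by
    simp_rw [real_inner_comm (W.starProjection _)]
    exact hv.sum_inner_apply_starProjection hV b W.starProjection
  simp only [frobSq, sub_apply, norm_sub_sq_real]
  rw [Finset.sum_add_distrib, Finset.sum_sub_distrib, ← Finset.mul_sum, hcross,
    hv.sum_norm_starProjection_sq hV b, hu.sum_norm_starProjection_sq hW b]
  ring

end Projection

section Radial

variable {E : Type*} [NormedAddCommGroup E] [InnerProductSpace ℝ E]

theorem hasFDerivAt_norm_of_ne_zero {u : E} (hu : u ≠ 0) :
    HasFDerivAt (‖·‖) (‖u‖⁻¹ • innerSL ℝ u) u := by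
  have h := (hasStrictFDerivAt_norm_sq u).hasFDerivAt.sqrt (by positivity)
  simp only [Real.sqrt_sq (norm_nonneg _)] at h
  convert h using 1
  ext v
  simp only [smul_apply, two_smul, add_apply, smul_eq_mul]
  field_simp
  ring

theorem HasDerivAt.hasFDerivAt_comp_norm_smul {ψ : ℝ → ℝ} {ψ' : ℝ} {u : E}
    (hψ : HasDerivAt ψ ψ' ‖u‖) (hu : u ≠ 0) :
    HasFDerivAt (fun v => ψ ‖v‖ • v)
      (ψ ‖u‖ • ContinuousLinearMap.id ℝ E + (ψ' • ‖u‖⁻¹ • innerSL ℝ u).smulRight u) u :=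
  (hψ.comp_hasFDerivAt u (hasFDerivAt_norm_of_ne_zero hu)).smul (hasFDerivAt_id u)

theorem Orthonormal.sum_inner_fderiv_comp_starProjection {ι : Type*} [Fintype ι] {w : ι → E}
    {K : Submodule ℝ E} [K.HasOrthogonalProjection] (hw : Orthonormal ℝ w)
    (hK : span ℝ (Set.range w) = K)
    (W : Submodule ℝ E) [W.HasOrthogonalProjection] {ψ : ℝ → ℝ} {p : E}
    (hψ : DifferentiableAt ℝ ψ ‖W.starProjection p‖) (hp : W.starProjection p ≠ 0) :
    ∑ i, ⟪fderiv ℝ (fun q => ψ ‖W.starProjection q‖ • W.starProjection q) p (w i), w i⟫ =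
      ψ ‖W.starProjection p‖ * ∑ i, ⟪W.starProjection (w i), w i⟫ +
        deriv ψ ‖W.starProjection p‖ * ‖K.starProjection (W.starProjection p)‖ ^ 2 /
          ‖W.starProjection p‖ := by
  set P := W.starProjection
  set u := P p
  have hD := (hψ.hasDerivAt.hasFDerivAt_comp_norm_smul hp).comp p P.hasFDerivAt
  change HasFDerivAt (fun q => ψ ‖P q‖ • P q) _ p at hD
  have hPu : ∀ v, ⟪u, P v⟫ = ⟪v, u⟫ := fun v => by
    rw [← inner_starProjection_left_eq_right, real_inner_comm]
    exact congrArg (⟪v, ·⟫) (DFunLike.congr_fun W.isIdempotentElem_starProjection.eq p)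
  have hterm : ∀ v, ⟪fderiv ℝ (fun q => ψ ‖P q‖ • P q) p v, v⟫ =
      ψ ‖u‖ * ⟪P v, v⟫ + deriv ψ ‖u‖ / ‖u‖ * ⟪v, u⟫ ^ 2 := fun v => by
    rw [hD.fderiv]
    simp only [ContinuousLinearMap.comp_apply, add_apply, smul_apply,
      ContinuousLinearMap.smulRight_apply, ContinuousLinearMap.id_apply, innerSL_apply_apply,
      inner_add_left, real_inner_smul_left, smul_eq_mul, hPu, real_inner_comm u v]
    ring
  simp only [hterm, Finset.sum_add_distrib, ← Finset.mul_sum, hw.norm_starProjection_sq hK]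
  ring

end Radial

section ProductSpace

variable {n m : ℕ}

theorem inner_mk2 (a c : EuclideanSpace ℝ (Fin n)) (b d : EuclideanSpace ℝ (Fin m)) :
    ⟪mk2 a b, mk2 c d⟫ = ⟪a, c⟫ + ⟪b, d⟫ := rfl

theorem mk2_fst2_snd2 (p : E2 n m) : mk2 (fst2 p) (snd2 p) = p := rfl

theorem norm_mk2_zero (a : EuclideanSpace ℝ (Fin n)) : ‖(mk2 a 0 : E2 n m)‖ = ‖a‖ :=
  WithLp.norm_toLp_fst 2 _ _ a

theorem mem_P0_iff {p : E2 n m} : p ∈ P0 n m ↔ snd2 p = 0 :=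
  ⟨fun h => h.2, fun h => ⟨trivial, h⟩⟩

theorem starProjection_P0_apply (p : E2 n m) : (P0 n m).starProjection p = mk2 (fst2 p) 0 := by
  refine eq_starProjection_of_mem_orthogonal' (z := mk2 0 (snd2 p)) (mem_P0_iff.2 rfl) ?_ ?_
  · rw [mem_orthogonal]
    intro u hu
    rw [← mk2_fst2_snd2 u, mem_P0_iff.1 hu, inner_mk2, inner_zero_left, inner_zero_right,
      add_zero]
  · change p = mk2 (fst2 p + 0) (0 + snd2 p)
    rw [add_zero, zero_add, mk2_fst2_snd2]

theorem orthonormal_mk2_zero {ι : Type*} {v : ι → EuclideanSpace ℝ (Fin n)}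
    (hv : Orthonormal ℝ v) : Orthonormal ℝ (fun i => (mk2 (v i) 0 : E2 n m)) :=
  ⟨fun i => by rw [norm_mk2_zero, hv.1 i],
    fun i j hij => by dsimp only; rw [inner_mk2, hv.2 hij, inner_zero_left, add_zero]⟩

theorem span_mk2_basisFun :
    span ℝ (Set.range fun j => (mk2 (EuclideanSpace.basisFun (Fin n) ℝ j) 0 : E2 n m)) =
      P0 n m := by
  let f : EuclideanSpace ℝ (Fin n) →ₗ[ℝ] E2 n m :=
    (WithLp.linearEquiv 2 ℝ _).symm.toLinearMap ∘ₗ LinearMap.inl ℝ _ _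
  calc span ℝ (Set.range (f ∘ EuclideanSpace.basisFun (Fin n) ℝ))
      = (span ℝ (Set.range (EuclideanSpace.basisFun (Fin n) ℝ))).map f := by
        rw [Set.range_comp, span_image]
    _ = LinearMap.range f := by
        rw [← OrthonormalBasis.coe_toBasis, Module.Basis.span_eq, Submodule.map_top]
    _ = P0 n m := by
        ext p
        refine ⟨fun ⟨a, ha⟩ => ha ▸ mem_P0_iff.2 rfl, fun hp => ⟨fst2 p, ?_⟩⟩
        rw [← mk2_fst2_snd2 p, mem_P0_iff.1 hp]
        rfl

end ProductSpace

/-- Tangential divergence along an `n`-dimensional subspace `S` of `ℝⁿ × ℝᵐ` (with orthonormal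
basis `τ₁,…,τₙ`) of the vector field `ζ(x,y) = ψ(‖x‖)·(x,0)`: at every point `(x,y)` with
`x ≠ 0`, `∑ᵢ ⟨Dζ(x,y)[τᵢ], τᵢ⟩ = ψ(‖x‖)(n − ½‖π_S − π_{P₀}‖_F²) + ψ'(‖x‖)‖π_S(x,0)‖²/‖x‖`. -/
theorem stmt18 (n m : ℕ) (S : Submodule ℝ (E2 n m))
    (τ : Fin n → E2 n m) (hτ : Orthonormal ℝ τ)
    (hspan : Submodule.span ℝ (Set.range τ) = S)
    (ψ : ℝ → ℝ) (hψ : Differentiable ℝ ψ)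
    (x : EuclideanSpace ℝ (Fin n)) (y : EuclideanSpace ℝ (Fin m)) (hx : x ≠ 0) :
    ∑ i, (inner ℝ
        (fderiv ℝ (fun p : E2 n m => ψ ‖fst2 p‖ • mk2 (fst2 p) 0) (mk2 x y) (τ i))
        (τ i) : ℝ) =
      ψ ‖x‖ * (n - (1 / 2) * frobSq (proj S - proj (P0 n m))) +
        deriv ψ ‖x‖ * ‖proj S (mk2 x 0)‖ ^ 2 / ‖x‖ := by
  have hfield : (fun p : E2 n m => ψ ‖fst2 p‖ • mk2 (fst2 p) 0) =
      fun p => ψ ‖(P0 n m).starProjection p‖ • (P0 n m).starProjection p := by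
    funext p
    rw [starProjection_P0_apply, norm_mk2_zero]
  have hxP0 : (P0 n m).starProjection (mk2 x y) = mk2 x 0 := starProjection_P0_apply _
  have hxP0_ne : (P0 n m).starProjection (mk2 x y) ≠ 0 := by
    rw [hxP0, ← norm_ne_zero_iff, norm_mk2_zero]
    exact norm_ne_zero_iff.2 hx
  rw [hfield, hτ.sum_inner_fderiv_comp_starProjection hspan _ (hψ _) hxP0_ne,
    proj_eq_starProjection, proj_eq_starProjection, frobSq_starProjection_sub hτ hspan
      (orthonormal_mk2_zero (EuclideanSpace.basisFun _ ℝ).orthonormal) span_mk2_basisFun,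
    hxP0, norm_mk2_zero, Fintype.card_fin]
  ring
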